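/- arXiv:2408.04921 — 2 statements merged into one kernel-verified Lean document; each statement's English description precedes it below -/
import Mathlib

section
/- Let λ = (λ_1, ..., λ_l) be a partition and m a positive integer. If an m-rim hook η of λ has height r ≥ 1 and starts at row i (occupying rows i through i+r), then ∑_{j=0}^{r-1}(λ_{i+j} − λ_{i+j+1} + 1) + 1 ≤ m ≤ ∑_{j=0}^{r-1}(λ_{i+j} − λ_{i+j+1} + 1) + (λ_{i+r} − λ_{i+r+1}), equivalently λ_{i+r+1} − r ≤ λ_i − m ≤ λ_{i+r} − (r+1). -/
open scoped Classical

/-- A function `ℕ → ℕ` representing a partition: weakly decreasing and eventually zero.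
Row `i` (0-indexed) has `lam i` boxes. -/
def IsPartitionFun (lam : ℕ → ℕ) : Prop :=
  Antitone lam ∧ ∃ N, ∀ i ≥ N, lam i = 0

/-- The size `|λ|` of a partition function. -/
noncomputable def msize (lam : ℕ → ℕ) : ℕ := ∑ᶠ i, lam i

/-- The cells of the skew shape `λ − μ`. -/
def skewCells (lam mu : ℕ → ℕ) : Set (ℕ × ℕ) :=
  {c | mu c.1 ≤ c.2 ∧ c.2 < lam c.1}

/-- Two cells are adjacent if they share an edge. -/
def AdjCell (c d : ℕ × ℕ) : Prop :=
  (c.1 = d.1 ∧ (c.2 + 1 = d.2 ∨ d.2 + 1 = c.2)) ∨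
  (c.2 = d.2 ∧ (c.1 + 1 = d.1 ∨ d.1 + 1 = c.1))

/-- A set of cells is (edge-)connected. -/
def CellConnected (S : Set (ℕ × ℕ)) : Prop :=
  ∀ c ∈ S, ∀ d ∈ S, Relation.ReflTransGen (fun x y => x ∈ S ∧ y ∈ S ∧ AdjCell x y) c d

/-- A set of cells contains no 2×2 block. -/
def NoSquare (S : Set (ℕ × ℕ)) : Prop :=
  ¬ ∃ i j : ℕ, (i, j) ∈ S ∧ (i + 1, j) ∈ S ∧ (i, j + 1) ∈ S ∧ (i + 1, j + 1) ∈ S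

/-- `λ − μ` is a rim hook (border strip) of size `m`: both are partitions, `μ ⊆ λ`,
and the skew shape has `m` cells, is connected and contains no 2×2 block. -/
def IsRimHook (lam mu : ℕ → ℕ) (m : ℕ) : Prop :=
  IsPartitionFun lam ∧ IsPartitionFun mu ∧ (∀ i, mu i ≤ lam i) ∧
  (skewCells lam mu).ncard = m ∧ CellConnected (skewCells lam mu) ∧ NoSquare (skewCells lam mu)

/-- The height of the skew shape `λ − μ`: one less than the number of occupied rows. -/
noncomputable def heightOf (lam mu : ℕ → ℕ) : ℕ := {i | mu i < lam i}.ncard - 1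

/-- The irreducible character value `χ^λ_ρ` of the symmetric group, presented through
the (iterated) Murnaghan–Nakayama rule: remove rim hooks of sizes `ρ₁, ρ₂, …` in turn. -/
noncomputable def charMN : List ℕ → (ℕ → ℕ) → ℤ
  | [], lam => if ∀ i, lam i = 0 then 1 else 0
  | r :: rho, lam =>
      ∑ᶠ mu : {mu : ℕ → ℕ // IsRimHook lam mu r},
        (-1) ^ heightOf lam mu.1 * charMN rho mu.1

/-- A list is a partition of `n`: weakly decreasing, positive parts, summing to `n`. -/
def IsPartitionList (rho : List ℕ) (n : ℕ) : Prop :=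
  rho.Pairwise (· ≥ ·) ∧ (∀ r ∈ rho, 0 < r) ∧ rho.sum = n

/-!
Consecutive rows `j`, `j + 1` of a rim hook overlap in exactly one column: connectedness forces
an overlap (`μ_j < λ_{j+1}`) and the absence of `2 × 2` blocks forbids a second common column
(`λ_{j+1} ≤ μ_j + 1`). Hence every occupied row but the last contributes
`λ_j − μ_j = λ_j − λ_{j+1} + 1` cells, while the last row `i + r` contributes
`λ_{i+r} − μ_{i+r}`, which lies between `1` and `λ_{i+r} − λ_{i+r+1}` because
`λ_{i+r+1} = μ_{i+r+1} ≤ μ_{i+r} < λ_{i+r}`. Summing and telescoping gives both inequalities.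
-/

theorem exists_vertical_step_of_reflTransGen {S : Set (ℕ × ℕ)} {c d : ℕ × ℕ} {j : ℕ}
    (h : Relation.ReflTransGen (fun x y => x ∈ S ∧ y ∈ S ∧ AdjCell x y) c d)
    (hc : c.1 ≤ j) (hd : j < d.1) : ∃ col, (j, col) ∈ S ∧ (j + 1, col) ∈ S := by
  induction h with
  | refl => omega
  | @tail p q _ hpq ih =>
    by_cases hp : p.1 ≤ j
    · obtain ⟨hpS, hqS, hadj⟩ := hpq
      rcases hadj with ⟨hsame_row, -⟩ | ⟨hcol, hvert⟩
      · omega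
      · obtain ⟨p1, p2⟩ := p
        obtain ⟨q1, q2⟩ := q
        obtain ⟨rfl, rfl⟩ : p1 = j ∧ q1 = j + 1 := by dsimp only at *; omega
        dsimp only at hcol
        subst hcol
        exact ⟨p2, hpS, hqS⟩
    · exact ih (by omega)

theorem mu_lt_lam_succ_of_cellConnected {lam mu : ℕ → ℕ} {j : ℕ}
    (hconn : CellConnected (skewCells lam mu)) (hj : mu j < lam j)
    (hj1 : mu (j + 1) < lam (j + 1)) : mu j < lam (j + 1) := by
  obtain ⟨col, hcol, hcol1⟩ := exists_vertical_step_of_reflTransGen (j := j)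
    (hconn (j, mu j) ⟨le_rfl, hj⟩ (j + 1, mu (j + 1)) ⟨le_rfl, hj1⟩) le_rfl (Nat.lt_succ_self j)
  exact hcol.1.trans_lt hcol1.2

theorem lam_succ_le_mu_add_one_of_noSquare {lam mu : ℕ → ℕ} {j : ℕ}
    (hlam : Antitone lam) (hmu : Antitone mu) (hsq : NoSquare (skewCells lam mu))
    (hj : mu j < lam (j + 1)) : lam (j + 1) ≤ mu j + 1 := by
  by_contra! hlt
  have hlam_le : lam (j + 1) ≤ lam j := hlam j.le_succ
  have hmu_le : mu (j + 1) ≤ mu j := hmu j.le_succ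
  refine hsq ⟨j, mu j, ?_, ⟨hmu_le, hj⟩, ?_, ?_⟩ <;> simp only [skewCells, Set.mem_ofPred_eq] <;> omega

theorem IsRimHook.mu_add_one_eq_lam_succ {lam mu : ℕ → ℕ} {m j : ℕ} (h : IsRimHook lam mu m)
    (hj : mu j < lam j) (hj1 : mu (j + 1) < lam (j + 1)) : mu j + 1 = lam (j + 1) := by
  obtain ⟨⟨hlam, -⟩, ⟨hmu, -⟩, -, -, hconn, hsq⟩ := h
  have hover := mu_lt_lam_succ_of_cellConnected hconn hj hj1
  have := lam_succ_le_mu_add_one_of_noSquare hlam hmu hsq hover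
  omega

theorem IsRimHook.lam_succ_le_mu_of_not_lt {lam mu : ℕ → ℕ} {m j : ℕ} (h : IsRimHook lam mu m)
    (hj1 : ¬ mu (j + 1) < lam (j + 1)) : lam (j + 1) ≤ mu j := by
  have hle := h.2.2.1 (j + 1)
  have hmu := h.2.1.1 (Nat.le_add_right j 1)
  omega

theorem ncard_skewCells_eq_sum {lam mu : ℕ → ℕ} (s : Finset ℕ)
    (hs : ∀ j, mu j < lam j → j ∈ s) :
    (skewCells lam mu).ncard = ∑ j ∈ s, (lam j - mu j) := by
  have hcells : skewCells lam mu = ↑(s.biUnion fun j => {j} ×ˢ Finset.Ico (mu j) (lam j)) := by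
    ext ⟨a, b⟩
    simp only [skewCells, Set.mem_ofPred_eq, Finset.coe_biUnion, Finset.mem_coe, Set.mem_iUnion,
      Finset.coe_product, Finset.coe_singleton, Set.singleton_prod, Set.mem_image,
      Finset.coe_Ico, Set.mem_Ico, Prod.mk.injEq, exists_prop]
    constructor
    · rintro ⟨h1, h2⟩
      exact ⟨a, hs a (h1.trans_lt h2), b, ⟨h1, h2⟩, rfl, rfl⟩
    · rintro ⟨x, -, y, hy, rfl, rfl⟩
      exact hy
  rw [hcells, Set.ncard_coe_finset, Finset.card_biUnion]
  · simp
  · intro x _ y _ hxy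
    simp only [Function.onFun, Finset.disjoint_left, Finset.mem_product, Finset.mem_singleton]
    rintro ⟨a, b⟩ ⟨rfl, -⟩ ⟨rfl, -⟩
    exact hxy rfl

theorem rim_hook_inequalities_general (lam mu : ℕ → ℕ) (m r i : ℕ)
    (hhook : IsRimHook lam mu m)
    (hrows : {j | mu j < lam j} = Set.Icc i (i + r)) :
    ((∑ j ∈ Finset.range r, ((lam (i + j) : ℤ) - (lam (i + j + 1) : ℤ) + 1)) + 1 ≤ (m : ℤ) ∧
      (m : ℤ) ≤ (∑ j ∈ Finset.range r, ((lam (i + j) : ℤ) - (lam (i + j + 1) : ℤ) + 1)) +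
        ((lam (i + r) : ℤ) - (lam (i + r + 1) : ℤ))) ∧
    ((lam (i + r + 1) : ℤ) - (r : ℤ) ≤ (lam i : ℤ) - (m : ℤ) ∧
      (lam i : ℤ) - (m : ℤ) ≤ (lam (i + r) : ℤ) - ((r : ℤ) + 1)) := by
  have hrow (j : ℕ) : mu j < lam j ↔ i ≤ j ∧ j ≤ i + r := Set.ext_iff.mp hrows j
  have hm : (m : ℤ) = ∑ k ∈ Finset.range (r + 1), ((lam (i + k) : ℤ) - mu (i + k)) := by
    rw [← hhook.2.2.2.1, ncard_skewCells_eq_sum (Finset.Icc i (i + r)) (by simp [hrow]),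
      ← Finset.Ico_add_one_right_eq_Icc, Finset.sum_Ico_eq_sum_range, Nat.cast_sum]
    refine Finset.sum_congr (by congr 1; omega) fun k _ => Nat.cast_sub (hhook.2.2.1 _)
  have hinner : ∀ k ∈ Finset.range r,
      (lam (i + k) : ℤ) - mu (i + k) = lam (i + k) - lam (i + k + 1) + 1 := fun k hk => by
    have hk := Finset.mem_range.mp hk
    have := hhook.mu_add_one_eq_lam_succ ((hrow (i + k)).2 ⟨by omega, by omega⟩)
      ((hrow (i + k + 1)).2 ⟨by omega, by omega⟩)
    omega
  rw [Finset.sum_range_succ, Finset.sum_congr rfl hinner] at hm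
  have hlast_lt : mu (i + r) < lam (i + r) := (hrow _).2 ⟨by omega, le_rfl⟩
  have hlast_ge : lam (i + r + 1) ≤ mu (i + r) :=
    hhook.lam_succ_le_mu_of_not_lt ((hrow (i + r + 1)).not.2 (by omega))
  have htel : ∑ k ∈ Finset.range r, ((lam (i + k) : ℤ) - lam (i + k + 1) + 1) =
      lam i - lam (i + r) + r := by
    have := Finset.sum_range_sub' (fun k => (lam (i + k) : ℤ)) r
    simp only [← add_assoc, add_zero] at this
    simp [Finset.sum_add_distrib, this]
  omega

/-- If an `m`-rim hook of `λ` has height `r ≥ 1` and occupies rows `i` through `i+r`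
(0-indexed), then
`∑_{j=0}^{r-1}(λ_{i+j} − λ_{i+j+1} + 1) + 1 ≤ m ≤ ∑_{j=0}^{r-1}(λ_{i+j} − λ_{i+j+1} + 1) + (λ_{i+r} − λ_{i+r+1})`,
equivalently `λ_{i+r+1} − r ≤ λ_i − m ≤ λ_{i+r} − (r+1)`. -/
theorem rim_hook_inequalities (lam mu : ℕ → ℕ) (m r i : ℕ) (hm : 1 ≤ m) (hr : 1 ≤ r)
    (hhook : IsRimHook lam mu m)
    (hrows : {j | mu j < lam j} = Set.Icc i (i + r)) :
    ((∑ j ∈ Finset.range r, ((lam (i + j) : ℤ) - (lam (i + j + 1) : ℤ) + 1)) + 1 ≤ (m : ℤ) ∧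
      (m : ℤ) ≤ (∑ j ∈ Finset.range r, ((lam (i + j) : ℤ) - (lam (i + j + 1) : ℤ) + 1)) +
        ((lam (i + r) : ℤ) - (lam (i + r + 1) : ℤ))) ∧
    ((lam (i + r + 1) : ℤ) - (r : ℤ) ≤ (lam i : ℤ) - (m : ℤ) ∧
      (lam i : ℤ) - (m : ℤ) ≤ (lam (i + r) : ℤ) - ((r : ℤ) + 1)) :=
  rim_hook_inequalities_general lam mu m r i hhook hrows
end

section
/- Any partition λ of n is uniquely determined by its k-core γ_λ together with its k-quotient (λ^{(0)}, ..., λ^{(k-1)}), and |λ| = k·(|λ^{(0)}| + ⋯ + |λ^{(k-1)}|) + |γ_λ|. -/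
open scoped Classical

/-- `γ` is a `k`-core of `λ`: reachable from `λ` by successive removals of `k`-rim hooks,
and admitting no further `k`-rim hook removal. -/
def IsCoreOf (k : ℕ) (lam gamma : ℕ → ℕ) : Prop :=
  Relation.ReflTransGen (fun a b => IsRimHook a b k) lam gamma ∧
  ¬ ∃ mu : ℕ → ℕ, IsRimHook gamma mu k

/-- The number of beta-numbers used for the `k`-quotient: a multiple of `k` bounding the
length of `λ`. -/
noncomputable def betaLen (k : ℕ) (lam : ℕ → ℕ) : ℕ := k * (msize lam + 1)

/-- The beta-numbers `ξ_i = λ_i + (m − 1 − i)` (0-indexed, `i < m`, `m = betaLen k lam`). -/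
noncomputable def beta (k : ℕ) (lam : ℕ → ℕ) (i : ℕ) : ℕ := lam i + (betaLen k lam - 1 - i)

/-- The `r`-th constituent of the `k`-quotient of `λ`, as a multiset of parts: for each
beta-number `ξ_i ≡ r (mod k)` of rank `s` (from the top) among those, the part
`ξ^{(r)}_s div k − (m_r − s)`. -/
noncomputable def quotientPart (k : ℕ) (lam : ℕ → ℕ) (r : ℕ) : Multiset ℕ :=
  (((Finset.range (betaLen k lam)).filter (fun i => beta k lam i % k = r)).val).map
    (fun i => beta k lam i / k -
      ((Finset.range (betaLen k lam)).filter
        (fun i' => beta k lam i' % k = r ∧ beta k lam i' < beta k lam i)).card)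

/-!
Encode `λ` by its beta-set `B = {λ_i + m − 1 − i}` and place the beads on a `k`-abacus,
runner `r` holding the beads `≡ r (mod k)`. Removing a `k`-rim hook from rows `a, …, b` is
the same as sliding the bead `λ_a + m − 1 − a` one level up its runner into an empty position,
so the number of beads on each runner is an invariant of the removal process, and `γ` is a
`k`-core exactly when every runner is filled from the top without gaps. The `r`-th quotient
is the partition read off the beads of runner `r`. A finite set of beads is determined by its
bead count and the partition it encodes, so `λ` is recovered from `γ` (which fixes the bead
counts) and the quotient; summing the beads runner by runner gives the size formula.
-/

open Finset Relation

section BetaParts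

/-- The parts of the partition whose beta-set is `T`. -/
def betaParts (T : Finset ℕ) : Multiset ℕ :=
  T.val.map fun t => t - #(T.filter (· < t))

lemma filter_lt_insert_of_forall_lt {T : Finset ℕ} {b t : ℕ} (hb : ∀ s ∈ T, s < b)
    (ht : t ∈ insert b T) : (insert b T).filter (· < t) = T.filter (· < t) := by
  rw [filter_insert, if_neg]
  rcases mem_insert.1 ht with rfl | ht
  · exact lt_irrefl t
  · exact (hb t ht).not_gt

lemma betaParts_insert_of_forall_lt {T : Finset ℕ} {b : ℕ} (hb : ∀ t ∈ T, t < b) :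
    betaParts (insert b T) = (b - #T) ::ₘ betaParts T := by
  have hbT : b ∉ T := fun h => lt_irrefl b (hb b h)
  rw [betaParts, insert_val_of_notMem hbT, Multiset.map_cons,
    filter_lt_insert_of_forall_lt hb (mem_insert_self b T), filter_true_of_mem hb]
  congr 1
  exact Multiset.map_congr rfl fun t ht =>
    by rw [filter_lt_insert_of_forall_lt hb (mem_insert_of_mem ht)]

lemma card_le_of_forall_lt {T : Finset ℕ} {b : ℕ} (hb : ∀ t ∈ T, t < b) : #T ≤ b := by
  simpa using card_le_card fun t ht => mem_range.2 (hb t ht)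

lemma betaParts_le_of_forall_lt {T : Finset ℕ} {b : ℕ} (hb : ∀ t ∈ T, t < b) :
    ∀ p ∈ betaParts T, p ≤ b - #T := by
  simp only [betaParts, Multiset.mem_map, mem_val]
  rintro _ ⟨t, ht, rfl⟩
  have hsplit := card_filter_add_card_filter_not (s := T) (p := (· < t))
  have habove : #(T.filter fun s => ¬ s < t) ≤ b - t := by
    simpa using card_le_card (s := T.filter fun s => ¬ s < t) (t := Ico t b)
      fun s hs => by simp only [mem_filter] at hs; simp [hb s hs.1]; omega
  have := hb t ht
  omega

lemma sum_betaParts_add_sum_range (T : Finset ℕ) :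
    (betaParts T).sum + ∑ i ∈ range #T, i = ∑ t ∈ T, t := by
  induction T using Finset.induction_on_max with
  | empty => simp [betaParts]
  | insert b T hb ih =>
    have hbT : b ∉ T := fun h => lt_irrefl b (hb b h)
    have := card_le_of_forall_lt hb
    rw [betaParts_insert_of_forall_lt hb, Multiset.sum_cons, card_insert_of_notMem hbT,
      sum_range_succ, sum_insert hbT, ← ih]
    omega

lemma betaParts_eq_cons_max' {T : Finset ℕ} (hT : T.Nonempty) :
    betaParts T = (T.max' hT + 1 - #T) ::ₘ betaParts (T.erase (T.max' hT)) := by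
  conv_lhs => rw [← insert_erase (T.max'_mem hT)]
  rw [betaParts_insert_of_forall_lt fun t => T.lt_max'_of_mem_erase_max' hT,
    card_erase_of_mem (T.max'_mem hT)]
  have := card_pos.2 hT
  congr 1
  omega

lemma le_of_mem_betaParts {T : Finset ℕ} (hT : T.Nonempty) :
    ∀ p ∈ betaParts T, p ≤ T.max' hT + 1 - #T :=
  betaParts_le_of_forall_lt fun t ht => Nat.lt_succ_of_le (T.le_max' t ht)

/-- The largest element of `T` carries the largest part, so it can be read off `betaParts T`. -/
lemma betaParts_injective {T T' : Finset ℕ} (hcard : #T = #T')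
    (h : betaParts T = betaParts T') : T = T' := by
  induction hn : #T generalizing T T' with
  | zero => rw [Finset.card_eq_zero.1 hn, Finset.card_eq_zero.1 (hcard.symm.trans hn)]
  | succ n ih =>
    have hT : T.Nonempty := card_pos.1 (by omega)
    have hT' : T'.Nonempty := card_pos.1 (by omega)
    have htop : ∀ {S : Finset ℕ} (hS : S.Nonempty), S.max' hS + 1 - #S ∈ betaParts S :=
      fun hS => betaParts_eq_cons_max' hS ▸ Multiset.mem_cons_self _ _
    have hcard_le : ∀ {S : Finset ℕ} (hS : S.Nonempty), #S ≤ S.max' hS + 1 :=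
      fun hS => card_le_of_forall_lt fun t ht => Nat.lt_succ_of_le (le_max' _ t ht)
    have hmax : T.max' hT = T'.max' hT' := by
      have := le_of_mem_betaParts hT' _ (h ▸ htop hT)
      have := le_of_mem_betaParts hT _ (h ▸ htop hT')
      have := hcard_le hT
      have := hcard_le hT'
      omega
    rw [betaParts_eq_cons_max' hT, betaParts_eq_cons_max' hT', hmax, hcard,
      Multiset.cons_inj_right] at h
    have hm : T'.max' hT' ∈ T := hmax ▸ T.max'_mem hT
    have herase := ih (by rw [card_erase_of_mem hm, card_erase_of_mem (T'.max'_mem hT'), hcard]) h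
      (by rw [card_erase_of_mem hm]; omega)
    calc T = insert (T'.max' hT') (T.erase (T'.max' hT')) := (insert_erase hm).symm
      _ = T' := by rw [herase, insert_erase (T'.max'_mem hT')]

lemma eq_range_card_of_pred_mem {Q : Finset ℕ} (h : ∀ q, q + 1 ∈ Q → q ∈ Q) :
    Q = range #Q := by
  have hdown : ∀ q ∈ Q, range (q + 1) ⊆ Q := fun q hq p hp =>
    Nat.decreasingInduction (fun j _ hj => h j hj) hq (Nat.lt_succ_iff.1 (mem_range.1 hp))
  refine eq_of_subset_of_card_le (fun q hq => mem_range.2 ?_) (by simp)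
  simpa using card_le_card (hdown q hq)

end BetaParts

section Abacus

variable {k r : ℕ} {B C : Finset ℕ}

/-- The beads of `B` on runner `r` of the `k`-abacus, recorded by their levels `v / k`. -/
def runner (k r : ℕ) (B : Finset ℕ) : Finset ℕ := (B.filter (· % k = r)).image (· / k)

lemma lt_iff_div_lt_div_of_mod_eq (hk : 0 < k) {u v : ℕ} (huv : u % k = v % k) :
    u < v ↔ u / k < v / k := by
  have hu := Nat.div_add_mod u k
  have hv := Nat.div_add_mod v k
  have := Nat.mod_lt u hk
  calc u < v ↔ k * (u / k) < k * (v / k) := by omega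
    _ ↔ u / k < v / k := Nat.mul_lt_mul_left hk

lemma div_injOn_filter_mod (k r : ℕ) (B : Finset ℕ) :
    Set.InjOn (· / k) ↑(B.filter (· % k = r)) := by
  intro u hu v hv huv
  simp only [coe_filter, Set.mem_ofPred_eq] at hu hv
  have hu' := Nat.div_add_mod u k
  have hv' := Nat.div_add_mod v k
  simp only at huv
  rw [huv, hu.2] at hu'
  rw [hv.2] at hv'
  omega

lemma card_runner : #(runner k r B) = #(B.filter (· % k = r)) :=
  card_image_of_injOn (div_injOn_filter_mod k r B)

lemma filter_mod_eq_image_runner :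
    B.filter (· % k = r) = (runner k r B).image (k * · + r) := by
  ext v
  simp only [runner, mem_image, mem_filter]
  constructor
  · rintro ⟨hv, rfl⟩
    exact ⟨v / k, ⟨v, ⟨hv, rfl⟩, rfl⟩, Nat.div_add_mod v k⟩
  · rintro ⟨_, ⟨w, ⟨hw, rfl⟩, rfl⟩, rfl⟩
    rw [Nat.div_add_mod]
    exact ⟨hw, rfl⟩

lemma sum_filter_mod (hk : 0 < k) :
    ∑ v ∈ B.filter (· % k = r), v = k * ∑ q ∈ runner k r B, q + r * #(runner k r B) := by
  rw [filter_mod_eq_image_runner, sum_image fun q _ q' _ h => by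
    simpa [hk.ne'] using h]
  rw [sum_add_distrib, mul_sum, sum_const, smul_eq_mul, mul_comm r]

lemma sum_eq_sum_runner (hk : 0 < k) (B : Finset ℕ) :
    ∑ v ∈ B, v = ∑ r ∈ range k, (k * ∑ q ∈ runner k r B, q + r * #(runner k r B)) := by
  rw [← sum_fiberwise_of_maps_to (g := (· % k)) fun v _ => mem_range.2 (Nat.mod_lt v hk)]
  exact sum_congr rfl fun r _ => sum_filter_mod hk

lemma runner_eq_range_of_sub_mem (hk : 0 < k) (hB : ∀ y, y + k ∈ B → y ∈ B) :
    runner k r B = range #(runner k r B) := by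
  refine eq_range_card_of_pred_mem fun q hq => ?_
  obtain ⟨v, hv, hvq⟩ := mem_image.1 hq
  rw [mem_filter] at hv
  have hr : r < k := hv.2 ▸ Nat.mod_lt v hk
  have hdiv := Nat.div_add_mod v k
  rw [hvq, hv.2] at hdiv
  refine mem_image.2 ⟨k * q + r, mem_filter.2 ⟨hB _ ?_, ?_⟩, ?_⟩
  · rw [show k * q + r + k = v by rw [← hdiv]; ring]
    exact hv.1
  · simp [Nat.mod_eq_of_lt hr]
  · simp [Nat.add_div_of_dvd_right (dvd_mul_right k q), hk, Nat.div_eq_of_lt hr]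

lemma card_runner_insert_erase {y : ℕ} (hy : y + k ∈ B) (hy' : y ∉ B) :
    #(runner k r (insert y (B.erase (y + k)))) = #(runner k r B) := by
  rw [card_runner, card_runner, filter_insert, filter_erase]
  by_cases hr : y % k = r
  · have hmem : y + k ∈ B.filter (· % k = r) := mem_filter.2 ⟨hy, by simpa using hr⟩
    rw [if_pos hr, card_insert_of_notMem fun h => hy' (mem_filter.1 (mem_of_mem_erase h)).1,
      card_erase_of_mem hmem, Nat.sub_add_cancel (card_pos.2 ⟨_, hmem⟩)]
  · rw [if_neg hr, erase_eq_of_notMem fun h => hr (by simpa using (mem_filter.1 h).2)]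

lemma sum_eq_mul_sum_betaParts_add (hk : 0 < k) (hC : ∀ y, y + k ∈ C → y ∈ C)
    (hcard : ∀ r, #(runner k r B) = #(runner k r C)) :
    ∑ v ∈ B, v = k * ∑ r ∈ range k, (betaParts (runner k r B)).sum + ∑ v ∈ C, v := by
  rw [sum_eq_sum_runner hk B, sum_eq_sum_runner hk C, mul_sum, ← sum_add_distrib]
  refine sum_congr rfl fun r _ => ?_
  rw [runner_eq_range_of_sub_mem hk hC, card_range, ← hcard, ← sum_betaParts_add_sum_range]
  ring

lemma eq_of_betaParts_runner_eq (hk : 0 < k) (hcard : ∀ r < k, #(runner k r B) = #(runner k r C))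
    (h : ∀ r < k, betaParts (runner k r B) = betaParts (runner k r C)) : B = C := by
  ext v
  have hv : ∀ D : Finset ℕ, v ∈ D ↔ v ∈ (runner k (v % k) D).image (k * · + v % k) :=
    fun D => by rw [← filter_mod_eq_image_runner]; simp
  have hr := Nat.mod_lt v hk
  rw [hv B, hv C, betaParts_injective (hcard _ hr) (h _ hr)]

lemma betaParts_runner (hk : 0 < k) :
    betaParts (runner k r B) = (B.filter (· % k = r)).val.map
      fun v => v / k - #(B.filter fun v' => v' % k = r ∧ v' < v) := by
  rw [betaParts, runner, image_val_of_injOn (div_injOn_filter_mod k r B), Multiset.map_map]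
  refine Multiset.map_congr rfl fun v hv => ?_
  have hvr := (mem_filter.1 hv).2
  rw [Function.comp_apply, filter_image, card_image_of_injOn
    ((div_injOn_filter_mod k r B).mono (filter_subset _ _)), filter_filter]
  congr 2
  refine filter_congr fun v' _ => and_congr_right fun hv'r => ?_
  exact (lt_iff_div_lt_div_of_mod_eq hk (hv'r.trans hvr.symm)).symm

end Abacus

section BetaNumbers

variable {k M : ℕ} {lam mu : ℕ → ℕ}

lemma msize_eq_sum_range {N : ℕ} (h : ∀ i ≥ N, lam i = 0) :
    msize lam = ∑ i ∈ range N, lam i :=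
  finsum_eq_sum_of_support_subset lam fun i hi => by
    by_contra hiN
    exact hi (h i (by simpa using hiN))

lemma IsPartitionFun.eq_zero_of_msize_le (h : IsPartitionFun lam) {i : ℕ} (hi : msize lam ≤ i) :
    lam i = 0 := by
  obtain ⟨hanti, N, hN⟩ := h
  by_contra hne
  have hpos : ∀ j ∈ range (i + 1), 1 ≤ lam j := fun j hj =>
    (Nat.one_le_iff_ne_zero.2 hne).trans (hanti (Nat.lt_succ_iff.1 (mem_range.1 hj)))
  have := calc i + 1 = ∑ j ∈ range (i + 1), 1 := by simp
    _ ≤ ∑ j ∈ range (i + 1), lam j := sum_le_sum hpos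
    _ ≤ ∑ j ∈ range (max N (i + 1)), lam j := sum_le_sum_of_subset (by simp)
    _ = msize lam := (msize_eq_sum_range fun j hj => hN j (le_of_max_le_left hj)).symm
  omega

lemma IsPartitionFun.eq_zero_of_betaLen_le (hk : 0 < k) (h : IsPartitionFun lam) {i : ℕ}
    (hi : betaLen k lam ≤ i) : lam i = 0 :=
  h.eq_zero_of_msize_le (by
    have := Nat.le_mul_of_pos_left (msize lam + 1) hk
    rw [betaLen] at hi
    omega)

/-- `beta k lam = betaNum (betaLen k lam) lam` holds by definition. -/
def betaNum (M : ℕ) (lam : ℕ → ℕ) (i : ℕ) : ℕ := lam i + (M - 1 - i)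

def betaSet (M : ℕ) (lam : ℕ → ℕ) : Finset ℕ := (range M).image (betaNum M lam)

lemma betaNum_strictAntiOn (h : Antitone lam) : StrictAntiOn (betaNum M lam) (Set.Iio M) :=
  fun i _ j hj hij => by
    have := h hij.le
    simp only [Set.mem_Iio] at hj
    simp only [betaNum]
    omega

lemma card_betaSet (h : Antitone lam) : #(betaSet M lam) = M := by
  rw [betaSet, card_image_of_injOn (by simpa using (betaNum_strictAntiOn h).injOn), card_range]

lemma sum_betaSet (h : Antitone lam) (hM : ∀ i ≥ M, lam i = 0) :
    ∑ v ∈ betaSet M lam, v = msize lam + ∑ i ∈ range M, (M - 1 - i) := by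
  rw [betaSet, sum_image (by simpa using (betaNum_strictAntiOn h).injOn), msize_eq_sum_range hM,
    ← sum_add_distrib]
  rfl

/-- Read backwards, the beta-numbers are the increasing enumeration of the beta-set. -/
lemma eq_of_betaSet_eq (hlam : Antitone lam) (hmu : Antitone mu) (hlamM : ∀ i ≥ M, lam i = 0)
    (hmuM : ∀ i ≥ M, mu i = 0) (h : betaSet M lam = betaSet M mu) : lam = mu := by
  have henum : ∀ {nu : ℕ → ℕ}, Antitone nu → betaSet M nu = betaSet M mu →
      (fun i : Fin M => betaNum M nu (M - 1 - i)) =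
        (betaSet M mu).orderEmbOfFin (card_betaSet hmu) := fun {nu} hnu hnuset => by
    refine orderEmbOfFin_unique _ (fun i => ?_) fun i j hij => ?_
    · rw [← hnuset]
      exact mem_image_of_mem _ (mem_range.2 (by omega))
    · have : (i : ℕ) < j := hij
      exact betaNum_strictAntiOn hnu (Set.mem_Iio.2 (by omega)) (Set.mem_Iio.2 (by omega))
        (by omega)
  funext i
  rcases lt_or_ge i M with hi | hi
  · have := congrFun ((henum hlam h).trans (henum hmu rfl).symm) ⟨M - 1 - i, by omega⟩
    have hidx : M - 1 - (M - 1 - i) = i := by omega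
    simp only [betaNum, hidx] at this
    omega
  · rw [hlamM i hi, hmuM i hi]

lemma quotientPart_eq_betaParts_runner (hk : 0 < k) (h : Antitone lam) (r : ℕ) :
    quotientPart k lam r = betaParts (runner k r (betaSet (betaLen k lam) lam)) := by
  have hinj : Set.InjOn (betaNum (betaLen k lam) lam) ↑(range (betaLen k lam)) := by
    simpa using (betaNum_strictAntiOn h).injOn
  rw [betaParts_runner hk, betaSet, filter_image,
    image_val_of_injOn (hinj.mono (filter_subset _ _)), Multiset.map_map, quotientPart]
  refine Multiset.map_congr rfl fun i _ => ?_
  rw [Function.comp_apply, filter_image, card_image_of_injOn (hinj.mono (filter_subset _ _))]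
  rfl

end BetaNumbers

section RimHooks

variable {k M a b : ℕ} {lam mu : ℕ → ℕ}

lemma mem_skewCells {i j : ℕ} : (i, j) ∈ skewCells lam mu ↔ mu i ≤ j ∧ j < lam i :=
  Iff.rfl

lemma ncard_skewCells (hM : ∀ i ≥ M, lam i = 0) :
    (skewCells lam mu).ncard = ∑ i ∈ range M, (lam i - mu i) := by
  have hcells : skewCells lam mu = ↑(((range M).sigma fun i => Ico (mu i) (lam i)).map
      (Equiv.sigmaEquivProd ℕ ℕ).toEmbedding) := by
    ext ⟨i, j⟩
    simp only [skewCells, Set.mem_ofPred_eq, coe_map, Set.mem_image, mem_coe, mem_sigma,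
      mem_range, mem_Ico, Equiv.coe_toEmbedding]
    constructor
    · rintro ⟨hmu, hlam⟩
      refine ⟨⟨i, j⟩, ⟨?_, hmu, hlam⟩, rfl⟩
      by_contra hi
      exact absurd (hM i (not_lt.1 hi)) (by omega)
    · rintro ⟨⟨i', j'⟩, ⟨_, hmu, hlam⟩, he⟩
      cases he
      exact ⟨hmu, hlam⟩
  rw [hcells, Set.ncard_coe_finset, card_map, card_sigma]
  simp

lemma exists_vertical_pair_of_reflTransGen {S : Set (ℕ × ℕ)} {i : ℕ} {c d : ℕ × ℕ}
    (h : ReflTransGen (fun x y => x ∈ S ∧ y ∈ S ∧ AdjCell x y) c d)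
    (hc : c.1 ≤ i) (hd : i + 1 ≤ d.1) : ∃ j, (i, j) ∈ S ∧ (i + 1, j) ∈ S := by
  induction h with
  | refl => omega
  | @tail e f _ hef ih =>
    by_cases he : i + 1 ≤ e.1
    · exact ih he
    obtain ⟨heS, hfS, hadj⟩ := hef
    obtain ⟨e1, e2⟩ := e
    obtain ⟨f1, f2⟩ := f
    rcases hadj with ⟨h1, _⟩ | ⟨h2, h1⟩
    · simp only at h1 he hd; omega
    · simp only at h1 h2 he hd
      obtain ⟨rfl, rfl⟩ : e1 = i ∧ f1 = i + 1 := by omega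
      exact ⟨e2, heS, h2 ▸ hfS⟩

lemma sum_Icc_sub_add_eq (hab : a ≤ b) (hle : ∀ i, mu i ≤ lam i)
    (hmid : ∀ i, a ≤ i → i < b → mu i + 1 = lam (i + 1)) :
    ∑ i ∈ Icc a b, (lam i - mu i) + mu b + a = lam a + b := by
  induction b, hab using Nat.le_induction with
  | base =>
    have := hle a
    rw [Icc_self, sum_singleton]
    omega
  | succ b hab ih =>
    have := hmid b hab (by omega)
    have := hle (b + 1)
    have := ih fun i hi hib => hmid i hi (by omega)
    rw [sum_Icc_succ_top (by omega)]
    omega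

/-- `λ / μ` is a border strip occupying exactly the rows `a, …, b`. -/
structure IsHookOnRows (lam mu : ℕ → ℕ) (a b : ℕ) : Prop where
  le : a ≤ b
  eq_of_lt_or_lt : ∀ i, i < a ∨ b < i → mu i = lam i
  add_one_eq : ∀ i, a ≤ i → i < b → mu i + 1 = lam (i + 1)
  last_lt : mu b < lam b

namespace IsHookOnRows

lemma lt_iff (h : IsHookOnRows lam mu a b) (hlam : Antitone lam) (i : ℕ) :
    mu i < lam i ↔ a ≤ i ∧ i ≤ b := by
  constructor
  · intro hi
    by_contra hab
    have := h.eq_of_lt_or_lt i (by omega)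
    omega
  · rintro ⟨hai, hib⟩
    rcases hib.lt_or_eq with hib | rfl
    · have := h.add_one_eq i hai hib
      have := hlam (show i ≤ i + 1 by omega)
      omega
    · exact h.last_lt

lemma mu_le (h : IsHookOnRows lam mu a b) (hlam : Antitone lam) (i : ℕ) : mu i ≤ lam i := by
  by_cases hi : a ≤ i ∧ i ≤ b
  · exact ((h.lt_iff hlam i).2 hi).le
  · exact (h.eq_of_lt_or_lt i (by omega)).le

lemma antitone (h : IsHookOnRows lam mu a b) (hlam : Antitone lam) (hb : lam (b + 1) ≤ mu b) :
    Antitone mu := by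
  refine antitone_nat_of_succ_le fun i => ?_
  have := hlam (show i ≤ i + 1 by omega)
  have := h.mu_le hlam i
  have := h.mu_le hlam (i + 1)
  rcases lt_trichotomy (i + 1) a with hia | rfl | hia
  · rw [h.eq_of_lt_or_lt i (by omega), h.eq_of_lt_or_lt (i + 1) (Or.inl hia)]
    exact hlam (Nat.le_succ i)
  · rw [h.eq_of_lt_or_lt i (by omega)]
    omega
  rcases lt_trichotomy i b with hib | hib | hib
  · have := h.add_one_eq i (by omega) hib
    have := (h.lt_iff hlam (i + 1)).2 ⟨by omega, by omega⟩
    omega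
  · subst hib
    rw [h.eq_of_lt_or_lt (i + 1) (by omega)]
    exact hb
  · rw [h.eq_of_lt_or_lt i (by omega), h.eq_of_lt_or_lt (i + 1) (by omega)]
    exact hlam (Nat.le_succ i)

lemma sum_range_sub_add_eq (h : IsHookOnRows lam mu a b) (hlam : Antitone lam)
    (hM : ∀ i ≥ M, lam i = 0) :
    ∑ i ∈ range M, (lam i - mu i) + mu b + a = lam a + b := by
  have hsub : ∑ i ∈ range M, (lam i - mu i) = ∑ i ∈ Icc a b, (lam i - mu i) := by
    refine (sum_subset (fun i hi => mem_range.2 ?_) fun i _ hi => ?_).symm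
    · have := (h.lt_iff hlam i).2 (mem_Icc.1 hi)
      by_contra hiM
      have := hM i (by omega)
      omega
    · rw [h.eq_of_lt_or_lt i (by simp only [mem_Icc] at hi; omega), Nat.sub_self]
  rw [hsub, sum_Icc_sub_add_eq h.le (h.mu_le hlam) h.add_one_eq]

/-- Every cell is joined to the corner `(b, μ_b)`: go left to the start of its row, step down,
and repeat. -/
lemma cellConnected (h : IsHookOnRows lam mu a b) (hlam : Antitone lam) :
    CellConnected (skewCells lam mu) := by
  set S := skewCells lam mu
  let R := fun x y => x ∈ S ∧ y ∈ S ∧ AdjCell x y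
  have : Std.Symm R := ⟨fun x y ⟨hx, hy, hxy⟩ => ⟨hy, hx, by
    rcases hxy with ⟨h1, h2⟩ | ⟨h1, h2⟩
    · exact Or.inl ⟨h1.symm, h2.symm⟩
    · exact Or.inr ⟨h1.symm, h2.symm⟩⟩⟩
  have hleft : ∀ i n, (i, mu i + n) ∈ S → ReflTransGen R (i, mu i + n) (i, mu i) := by
    intro i n
    induction n with
    | zero => exact fun _ => .refl
    | succ n ih =>
      intro hn
      have hn' : (i, mu i + n) ∈ S := ⟨by simp, by have := hn.2; simp only at this ⊢; omega⟩
      exact .head ⟨hn, hn', Or.inl ⟨rfl, Or.inr rfl⟩⟩ (ih hn')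
  have hrow : ∀ i j, (i, j) ∈ S → ReflTransGen R (i, j) (i, mu i) := fun i j hij => by
    simpa [Nat.add_sub_cancel' hij.1] using hleft i (j - mu i) (by rwa [Nat.add_sub_cancel' hij.1])
  have hcorner : ∀ n i j, i + n = b → (i, j) ∈ S → ReflTransGen R (i, j) (b, mu b) := by
    intro n
    induction n with
    | zero =>
      rintro i j rfl hij
      exact hrow i j hij
    | succ n ih =>
      intro i j hi hij
      have hai := ((h.lt_iff hlam i).1 (lt_of_le_of_lt hij.1 hij.2)).1
      have := h.add_one_eq i hai (by omega)
      have := (h.lt_iff hlam (i + 1)).2 ⟨by omega, by omega⟩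
      have hstart : (i, mu i) ∈ S := ⟨le_rfl, (h.lt_iff hlam i).2 ⟨hai, by omega⟩⟩
      have hbelow : (i + 1, mu i) ∈ S := ⟨by simp only; omega, by simp only; omega⟩
      exact (hrow i j hij).trans (.head ⟨hstart, hbelow, Or.inr ⟨rfl, Or.inl rfl⟩⟩
        (ih (i + 1) (mu i) (by omega) hbelow))
  have hrows : ∀ c ∈ S, c.1 + (b - c.1) = b := fun c hc => by
    have := ((h.lt_iff hlam c.1).1 (lt_of_le_of_lt hc.1 hc.2)).2
    omega
  intro c hc d hd
  exact (hcorner _ c.1 c.2 (hrows c hc) hc).trans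
    (Std.Symm.symm _ _ (hcorner _ d.1 d.2 (hrows d hd) hd))

lemma noSquare (h : IsHookOnRows lam mu a b) (hlam : Antitone lam) :
    NoSquare (skewCells lam mu) := by
  rintro ⟨i, j, hij, hi1j, -, hi1j1⟩
  have hi := (h.lt_iff hlam i).1 (lt_of_le_of_lt hij.1 hij.2)
  have hi1 := (h.lt_iff hlam (i + 1)).1 (lt_of_le_of_lt hi1j.1 hi1j.2)
  have := h.add_one_eq i hi.1 (by omega)
  have := hij.1
  have := hi1j1.2
  simp only at *
  omega

lemma betaNum_notMem_betaSet (h : IsHookOnRows lam mu a b) (hlam : Antitone lam)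
    (hmu : Antitone mu) :
    betaNum M mu b ∉ betaSet M lam := by
  simp only [betaSet, mem_image, mem_range, not_exists, not_and]
  intro j hjM hj
  rcases le_or_gt j b with hjb | hjb
  · have := hlam hjb
    have := h.last_lt
    simp only [betaNum] at hj
    omega
  · have := betaNum_strictAntiOn (M := M) hmu (Set.mem_Iio.2 (by omega)) (Set.mem_Iio.2 hjM) hjb
    simp only [betaNum, h.eq_of_lt_or_lt j (Or.inr hjb)] at this hj
    omega

lemma lt_of_eq_zero (h : IsHookOnRows lam mu a b) (hM : ∀ i ≥ M, lam i = 0) : b < M := by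
  by_contra hbM
  have := h.last_lt
  rw [hM b (by omega)] at this
  omega

lemma betaSet_eq (h : IsHookOnRows lam mu a b) (hlam : Antitone lam) (hmu : Antitone mu)
    (hM : ∀ i ≥ M, lam i = 0) :
    betaSet M mu = insert (betaNum M mu b) ((betaSet M lam).erase (betaNum M lam a)) := by
  have hbM := h.lt_of_eq_zero hM
  have hmem : ∀ {nu : ℕ → ℕ} {i : ℕ}, i < M → betaNum M nu i ∈ betaSet M nu :=
    fun hi => mem_image_of_mem _ (mem_range.2 hi)
  refine (eq_of_subset_of_card_le (fun z hz => ?_) ?_).symm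
  · rcases mem_insert.1 hz with rfl | hz
    · exact hmem hbM
    obtain ⟨hza, j, hjM, rfl⟩ : _ ∧ ∃ j, j < M ∧ betaNum M lam j = z := by
      simpa [betaSet] using mem_erase.1 hz
    have hja : j ≠ a := fun hja => hza (hja ▸ rfl)
    by_cases hj : j < a ∨ b < j
    · convert hmem (nu := mu) hjM using 1
      simp only [betaNum, h.eq_of_lt_or_lt j hj]
    · convert hmem (nu := mu) (i := j - 1) (by omega) using 1
      have := h.add_one_eq (j - 1) (by omega) (by omega)
      rw [Nat.sub_add_cancel (by omega)] at this
      simp only [betaNum]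
      omega
  · rw [card_betaSet hmu, card_insert_of_notMem fun hy => h.betaNum_notMem_betaSet hlam hmu
      (mem_of_mem_erase hy), card_erase_of_mem (hmem (by have := h.le; omega)), card_betaSet hlam]
    omega

lemma isRimHook (h : IsHookOnRows lam mu a b) (hlam : IsPartitionFun lam)
    (hmu : IsPartitionFun mu) (hsize : k + mu b + a = lam a + b) : IsRimHook lam mu k := by
  obtain ⟨M, hM⟩ := hlam.2
  refine ⟨hlam, hmu, h.mu_le hlam.1, ?_, h.cellConnected hlam.1, h.noSquare hlam.1⟩
  have := h.sum_range_sub_add_eq hlam.1 hM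
  rw [ncard_skewCells hM]
  omega

end IsHookOnRows

lemma IsRimHook.exists_isHookOnRows (hk : 0 < k) (h : IsRimHook lam mu k) :
    ∃ a b, IsHookOnRows lam mu a b ∧ k + mu b + a = lam a + b := by
  obtain ⟨⟨hlam, M, hM⟩, ⟨hmu, -⟩, hle, hcard, hconn, hsq⟩ := h
  rw [ncard_skewCells hM] at hcard
  have hne : ∃ i, mu i < lam i := by
    by_contra! hno
    rw [sum_eq_zero fun i _ => by simp [hno i]] at hcard
    omega
  have hlt_M : ∀ {i}, mu i < lam i → i < M := fun hi => by
    by_contra hiM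
    rw [hM _ (by omega)] at hi
    omega
  classical
  set a := Nat.find hne
  set b := Nat.findGreatest (fun i => mu i < lam i) M
  have ha : mu a < lam a := Nat.find_spec hne
  have hb : mu b < lam b := Nat.findGreatest_spec (P := fun i => mu i < lam i) (hlt_M ha).le ha
  have hout : ∀ i, i < a ∨ b < i → mu i = lam i := by
    rintro i (hi | hi)
    · exact (hle i).antisymm (not_lt.1 (Nat.find_min hne hi))
    · by_cases hiM : i ≤ M
      · exact (hle i).antisymm
          (not_lt.1 (Nat.findGreatest_is_greatest (P := fun i => mu i < lam i) hi hiM))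
      · exact (hle i).antisymm (by rw [hM i (by omega)]; omega)
  have hmid : ∀ i, a ≤ i → i < b → mu i + 1 = lam (i + 1) := by
    intro i hai hib
    -- a path from row `a` to row `b` steps from row `i` down to row `i + 1` in some column `j`,
    -- so `μ_i < λ_{i+1}`; a gap of two cells there would contain a 2×2 square
    obtain ⟨j, hij, hi1j⟩ := exists_vertical_pair_of_reflTransGen
      (hconn (a, mu a) ⟨le_rfl, ha⟩ (b, mu b) ⟨le_rfl, hb⟩) hai hib
    have := hlam (show i ≤ i + 1 by omega)
    have := hmu (show i ≤ i + 1 by omega)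
    rw [mem_skewCells] at hij hi1j
    by_contra hne
    refine hsq ⟨i, mu i, ?_, ?_, ?_, ?_⟩ <;> rw [mem_skewCells] <;> omega
  have hab : a ≤ b := Nat.le_findGreatest (hlt_M ha).le ha
  have hhook : IsHookOnRows lam mu a b := ⟨hab, hout, hmid, hb⟩
  refine ⟨a, b, hhook, ?_⟩
  have := hhook.sum_range_sub_add_eq hlam hM
  omega

lemma IsRimHook.exists_betaSet_eq (hk : 0 < k) (h : IsRimHook lam mu k)
    (hM : ∀ i ≥ M, lam i = 0) :
    ∃ y, y + k ∈ betaSet M lam ∧ y ∉ betaSet M lam ∧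
      betaSet M mu = insert y ((betaSet M lam).erase (y + k)) := by
  obtain ⟨a, b, hhook, hsize⟩ := h.exists_isHookOnRows hk
  have hlam := h.1.1
  have hmu := h.2.1.1
  have hbM := hhook.lt_of_eq_zero hM
  have hy : betaNum M mu b + k = betaNum M lam a := by
    have := hhook.le
    simp only [betaNum]
    omega
  refine ⟨betaNum M mu b, hy ▸ mem_image_of_mem _ (mem_range.2 (by have := hhook.le; omega)),
    hhook.betaNum_notMem_betaSet hlam hmu, hy ▸ hhook.betaSet_eq hlam hmu hM⟩

/-- The hook runs from the row of the bead `y + k` down to the last row whose bead lies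
above `y`. -/
lemma exists_isRimHook_of_mem_betaSet (hk : 0 < k) (hlam : IsPartitionFun lam)
    (hM : ∀ i ≥ M, lam i = 0) {y : ℕ} (hyk : y + k ∈ betaSet M lam)
    (hy : y ∉ betaSet M lam) :
    ∃ mu, IsRimHook lam mu k := by
  obtain ⟨a, haM, ha⟩ : ∃ a, a < M ∧ betaNum M lam a = y + k := by simpa [betaSet] using hyk
  have hmem : ∀ {j}, j < M → betaNum M lam j ∈ betaSet M lam :=
    fun hj => mem_image_of_mem _ (mem_range.2 hj)
  set b := Nat.findGreatest (fun j => y < betaNum M lam j) (M - 1)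
  have hya : y < betaNum M lam a := by omega
  have hab : a ≤ b := Nat.le_findGreatest (by omega) hya
  have hbM : b < M := (Nat.findGreatest_le _).trans_lt (by omega)
  have hb : y < betaNum M lam b :=
    Nat.findGreatest_spec (P := fun j => y < betaNum M lam j) (by omega) hya
  have hnext : lam (b + 1) + (M - 1 - b) ≤ y := by
    rcases lt_or_ge (b + 1) M with hb1 | hb1
    · have hle := Nat.findGreatest_is_greatest (P := fun j => y < betaNum M lam j)
        (show b < b + 1 by omega) (by omega)
      have hne : betaNum M lam (b + 1) ≠ y := fun he => hy (he ▸ hmem hb1)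
      simp only [betaNum, not_lt] at hle hne
      omega
    · simp only [betaNum] at hb
      rw [hM _ hb1]
      omega
  have hlamb : 1 ≤ lam b := by
    simp only [betaNum] at hb
    omega
  let mu : ℕ → ℕ := fun i =>
    if i < a then lam i else if i < b then lam (i + 1) - 1 else if i = b then y - (M - 1 - b)
    else lam i
  have hhook : IsHookOnRows lam mu a b := by
    refine ⟨hab, fun i hi => ?_, fun i hai hib => ?_, ?_⟩
    · simp only [mu]
      split_ifs <;> omega
    · have := hlam.1 (show i + 1 ≤ b by omega)
      simp only [mu]
      split_ifs <;> omega
    · simp only [mu, betaNum] at hb ⊢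
      split_ifs <;> omega
  have hmub : mu b = y - (M - 1 - b) := by simp [mu, hab.not_gt]
  have hmu : IsPartitionFun mu := by
    refine ⟨hhook.antitone hlam.1 (by omega), M, fun i hi => ?_⟩
    rw [hhook.eq_of_lt_or_lt i (by omega), hM i hi]
  refine ⟨mu, hhook.isRimHook hlam hmu ?_⟩
  simp only [betaNum] at ha
  omega

end RimHooks

section Cores

variable {k M : ℕ} {lam gamma : ℕ → ℕ}

lemma eq_zero_of_reflTransGen_isRimHook
    (h : ReflTransGen (fun a b => IsRimHook a b k) lam gamma) (hM : ∀ i ≥ M, lam i = 0) :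
    ∀ i ≥ M, gamma i = 0 := by
  induction h with
  | refl => exact hM
  | tail _ hstep ih => exact fun i hi => Nat.eq_zero_of_le_zero (ih i hi ▸ hstep.2.2.1 i)

lemma card_runner_betaSet_of_reflTransGen (hk : 0 < k)
    (h : ReflTransGen (fun a b => IsRimHook a b k) lam gamma)
    (hM : ∀ i ≥ M, lam i = 0) (r : ℕ) :
    #(runner k r (betaSet M gamma)) = #(runner k r (betaSet M lam)) := by
  induction h with
  | refl => rfl
  | tail hchain hstep ih =>
    obtain ⟨y, hyk, hy, heq⟩ :=
      hstep.exists_betaSet_eq hk (eq_zero_of_reflTransGen_isRimHook hchain hM)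
    rw [heq, card_runner_insert_erase hyk hy, ih]

lemma IsCoreOf.isPartitionFun (h : IsCoreOf k lam gamma) (hlam : IsPartitionFun lam) :
    IsPartitionFun gamma := by
  rcases ReflTransGen.cases_tail h.1 with rfl | ⟨_, _, hstep⟩
  exacts [hlam, hstep.2.1]

lemma IsCoreOf.mem_betaSet_of_add_mem (hk : 0 < k) (h : IsCoreOf k lam gamma)
    (hgamma : IsPartitionFun gamma) (hM : ∀ i ≥ M, gamma i = 0) {y : ℕ}
    (hy : y + k ∈ betaSet M gamma) : y ∈ betaSet M gamma := by
  by_contra hy'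
  exact h.2 (exists_isRimHook_of_mem_betaSet hk hgamma hM hy hy')

lemma IsCoreOf.msize_eq (hk : 0 < k) (h : IsCoreOf k lam gamma) (hlam : IsPartitionFun lam) :
    msize lam = k * ∑ r ∈ range k, (quotientPart k lam r).sum + msize gamma := by
  have hM : ∀ i ≥ betaLen k lam, lam i = 0 := fun i => hlam.eq_zero_of_betaLen_le hk
  have hMγ := eq_zero_of_reflTransGen_isRimHook h.1 hM
  have hγ := h.isPartitionFun hlam
  have := sum_eq_mul_sum_betaParts_add hk
    (fun y => h.mem_betaSet_of_add_mem hk hγ hMγ)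
    fun r => (card_runner_betaSet_of_reflTransGen hk h.1 hM r).symm
  rw [sum_betaSet hlam.1 hM, sum_betaSet hγ.1 hMγ] at this
  simp only [quotientPart_eq_betaParts_runner hk hlam.1]
  omega

end Cores

/-- A partition `λ` is uniquely determined by its `k`-core together with its `k`-quotient,
and `|λ| = k·(|λ^{(0)}| + ⋯ + |λ^{(k-1)}|) + |γ_λ|`. -/
theorem core_quotient_determine (k : ℕ) (hk : 1 ≤ k) :
    (∀ lam lam' gamma : ℕ → ℕ, IsPartitionFun lam → IsPartitionFun lam' →
      IsCoreOf k lam gamma → IsCoreOf k lam' gamma →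
      (∀ r < k, quotientPart k lam r = quotientPart k lam' r) → lam = lam') ∧
    (∀ lam gamma : ℕ → ℕ, IsPartitionFun lam → IsCoreOf k lam gamma →
      msize lam = k * (∑ r ∈ Finset.range k, (quotientPart k lam r).sum) + msize gamma) := by
  refine ⟨fun lam lam' gamma hlam hlam' hcore hcore' hquot => ?_,
    fun lam gamma hlam hcore => hcore.msize_eq hk hlam⟩
  have hlen : betaLen k lam' = betaLen k lam := by
    rw [betaLen, betaLen, hcore.msize_eq hk hlam, hcore'.msize_eq hk hlam',
      sum_congr rfl fun r hr => by rw [← hquot r (mem_range.1 hr)]]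
  have hM : ∀ i ≥ betaLen k lam, lam i = 0 := fun i => hlam.eq_zero_of_betaLen_le hk
  have hM' : ∀ i ≥ betaLen k lam, lam' i = 0 := fun i hi =>
    hlam'.eq_zero_of_betaLen_le hk (hlen ▸ hi)
  refine eq_of_betaSet_eq hlam.1 hlam'.1 hM hM' (eq_of_betaParts_runner_eq hk (fun r _ => ?_)
    fun r hr => ?_)
  · rw [← card_runner_betaSet_of_reflTransGen hk hcore.1 hM,
      ← card_runner_betaSet_of_reflTransGen hk hcore'.1 hM']
  · rw [← quotientPart_eq_betaParts_runner hk hlam.1, hquot r hr,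
      quotientPart_eq_betaParts_runner hk hlam'.1, hlen]
end
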